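/- (Proposition 8.14, termination time from rapidly decreasing potential groups) There is a constant c > 0 such that the following holds. Let P be a population protocol with set of states Q, and let Φ = (Φ1,…,Φe) be a potential group for P of size e that is α-rapidly decreasing at every reachable configuration with at least m agents. Then for every initial configuration C₀ with n ≥ m agents, the expected number of interactions (in the probabilistic execution model) until the Markov chain started at C₀ reaches a terminal configuration is at most c·e·(√α·|Q| + α)·n². -/

import Mathlib

open scoped ENNReal Classical

namespace PaperPP

/-- Population computers (Angluin-style generalization). -/
structure PopComputer (σ : Type) where
  Q : Finset σ
  δ : Finset (Multiset σ × Multiset σ)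
  I : Finset σ
  O : Finset σ → Option Bool
  H : Multiset σ
  delta_mem : ∀ t ∈ δ, ∀ q ∈ t.1 + t.2, q ∈ Q
  delta_card : ∀ t ∈ δ, Multiset.card t.2 = Multiset.card t.1 ∧ 2 ≤ Multiset.card t.1
  delta_supp : ∀ t ∈ δ, ∃ a b : σ, ∀ q ∈ t.1, q = a ∨ q = b
  delta_fun : ∀ t ∈ δ, ∀ u ∈ δ, t.1 = u.1 → t.2 = u.2
  I_sub : I ⊆ Q
  H_mem : ∀ q ∈ H, q ∈ Q ∧ q ∉ I

variable {σ : Type}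

def Step (P : PopComputer σ) (C C' : Multiset σ) : Prop :=
  ∃ t ∈ P.δ, t.1 ≤ C ∧ C' = C - t.1 + t.2

def Reaches (P : PopComputer σ) : Multiset σ → Multiset σ → Prop :=
  Relation.ReflTransGen (Step P)

def Terminal (P : PopComputer σ) (C : Multiset σ) : Prop :=
  ∀ t ∈ P.δ, ¬ t.1 ≤ C

def IsInput (P : PopComputer σ) (C : Multiset σ) : Prop :=
  ∀ q ∈ C, q ∈ P.I

def Initial (P : PopComputer σ) (CI C0 : Multiset σ) : Prop :=
  ∃ CH : Multiset σ, (∀ q ∈ CH, q ∈ P.H) ∧ P.H ≤ CH ∧ C0 = CI + CH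

def ReachableConfig (P : PopComputer σ) (C : Multiset σ) : Prop :=
  ∃ CI C0, IsInput P CI ∧ Initial P CI C0 ∧ Reaches P C0 C

def IsRun (P : PopComputer σ) (f : ℕ → Multiset σ) : Prop :=
  ∀ i, Step P (f i) (f (i + 1)) ∨ (Terminal P (f i) ∧ f (i + 1) = f i)

def FairRun (P : PopComputer σ) (f : ℕ → Multiset σ) : Prop :=
  IsRun P f ∧ ∀ C : Multiset σ, {i | Reaches P (f i) C}.Infinite → ∃ j, f j = C

def StabilizesTo [DecidableEq σ] (P : PopComputer σ) (f : ℕ → Multiset σ) (b : Bool) : Prop :=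
  ∃ i, ∀ C, Reaches P (f i) C → P.O C.toFinset = some b

def HasOutput [DecidableEq σ] (P : PopComputer σ) (CI : Multiset σ) (b : Bool) : Prop :=
  ∀ C0 f, Initial P CI C0 → FairRun P f → f 0 = C0 → StabilizesTo P f b

def Decides [DecidableEq σ] (P : PopComputer σ) (φ : Multiset σ → Bool) : Prop :=
  ∀ CI, IsInput P CI → HasOutput P CI (φ CI)

def Bounded (P : PopComputer σ) : Prop :=
  ¬ ∃ f : ℕ → Multiset σ,
      (∃ CI, IsInput P CI ∧ Initial P CI (f 0)) ∧ ∀ i, Step P (f i) (f (i + 1))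

def Terminating (P : PopComputer σ) : Prop :=
  ∀ f : ℕ → Multiset σ, (∃ CI, IsInput P CI ∧ Initial P CI (f 0)) → FairRun P f →
    ∃ i, Terminal P (f i)

def Binary (P : PopComputer σ) : Prop := ∀ t ∈ P.δ, Multiset.card t.1 = 2

def ConsensusOutput [DecidableEq σ] (P : PopComputer σ) : Prop :=
  ∃ Q1 : Finset σ, Q1 ⊆ P.Q ∧ ∀ S : Finset σ, S ⊆ P.Q → S.Nonempty →
    P.O S = if S ⊆ Q1 then some true else if S ⊆ P.Q \ Q1 then some false else none

def MarkedConsensusOutput [DecidableEq σ] (P : PopComputer σ) : Prop :=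
  ∃ Q0 Q1 : Finset σ, Q0 ⊆ P.Q ∧ Q1 ⊆ P.Q ∧ Disjoint Q0 Q1 ∧
    ∀ S : Finset σ, S ⊆ P.Q → S.Nonempty →
      P.O S = if (S ∩ Q1).Nonempty ∧ S ∩ Q0 = ∅ then some true
        else if (S ∩ Q0).Nonempty ∧ S ∩ Q1 = ∅ then some false else none

def IsProtocol [DecidableEq σ] (P : PopComputer σ) : Prop :=
  Binary P ∧ P.H = 0 ∧ ConsensusOutput P

/-! Boolean circuits, used to measure the size of output functions. -/

inductive Circ (α : Type) : Type where
  | inp : α → Circ α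
  | tru : Circ α
  | fal : Circ α
  | neg : Circ α → Circ α
  | conj : Circ α → Circ α → Circ α
  | disj : Circ α → Circ α → Circ α

def Circ.eval {α : Type} (v : α → Bool) : Circ α → Bool
  | .inp a => v a
  | .tru => true
  | .fal => false
  | .neg c => !(Circ.eval v c)
  | .conj c d => Circ.eval v c && Circ.eval v d
  | .disj c d => Circ.eval v c || Circ.eval v d

def Circ.gates {α : Type} : Circ α → ℕ
  | .inp _ => 1
  | .tru => 1
  | .fal => 1
  | .neg c => Circ.gates c + 1
  | .conj c d => Circ.gates c + Circ.gates d + 1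
  | .disj c d => Circ.gates c + Circ.gates d + 1

noncomputable def outSize [DecidableEq σ] (P : PopComputer σ) : ℕ :=
  sInf {n | ∃ cd cv : Circ σ, Circ.gates cd + Circ.gates cv = n ∧
    ∀ S : Finset σ, S ⊆ P.Q →
      P.O S = if Circ.eval (fun q => decide (q ∈ S)) cd then
          some (Circ.eval (fun q => decide (q ∈ S)) cv) else none}

noncomputable def csize [DecidableEq σ] (P : PopComputer σ) : ℕ :=
  P.Q.card + Multiset.card P.H + outSize P + ∑ t ∈ P.δ, Multiset.card t.1

noncomputable def asize [DecidableEq σ] (P : PopComputer σ) : ℕ :=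
  P.Q.card + Multiset.card P.H + outSize P

/-! Probabilistic execution model. -/

def pairCount [DecidableEq σ] (C r : Multiset σ) : ℕ :=
  (Multiset.powersetCard 2 C).count r

noncomputable def stepKer [DecidableEq σ] (P : PopComputer σ) (C C' : Multiset σ) : ℝ≥0∞ :=
  (∑ t ∈ P.δ, if t.1 ≤ C ∧ C' = C - t.1 + t.2 then (pairCount C t.1 : ℝ≥0∞) else 0) /
      (Nat.choose (Multiset.card C) 2 : ℝ≥0∞) +
    (if C' = C then
      1 - (∑ t ∈ P.δ, (pairCount C t.1 : ℝ≥0∞)) / (Nat.choose (Multiset.card C) 2 : ℝ≥0∞)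
    else 0)

noncomputable def hitKer [DecidableEq σ] (P : PopComputer σ) (A : Set (Multiset σ))
    (C C' : Multiset σ) : ℝ≥0∞ :=
  if C ∈ A then (if C' = C then 1 else 0) else stepKer P C C'

noncomputable def hitIter [DecidableEq σ] (P : PopComputer σ) (A : Set (Multiset σ)) :
    ℕ → Multiset σ → Multiset σ → ℝ≥0∞
  | 0, C, C' => if C' = C then 1 else 0
  | n + 1, C, C' => ∑' D : Multiset σ, hitIter P A n C D * hitKer P A D C'

/-- Expected hitting time of the set `A`, computed as `∑ₜ Pr[Xₜ ∉ A]` for the chain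
absorbed at `A`. -/
noncomputable def expHit [DecidableEq σ] (P : PopComputer σ) (A : Set (Multiset σ))
    (C0 : Multiset σ) : ℝ≥0∞ :=
  ∑' n : ℕ, ∑' C : Multiset σ, if C ∈ A then 0 else hitIter P A n C0 C

def StableConfig [DecidableEq σ] (P : PopComputer σ) (C : Multiset σ) : Prop :=
  ∃ b : Bool, ∀ C', Reaches P C C' → P.O C'.toFinset = some b

noncomputable def expTermination [DecidableEq σ] (P : PopComputer σ) (C0 : Multiset σ) : ℝ≥0∞ :=
  expHit P {C | Terminal P C} C0

noncomputable def expStabilization [DecidableEq σ] (P : PopComputer σ) (C0 : Multiset σ) : ℝ≥0∞ :=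
  expHit P {C | StableConfig P C} C0

/-! Quantifier-free Presburger arithmetic. -/

inductive QFPA (v : ℕ) : Type where
  | threshold (a : Fin v → ℤ) (c : ℤ) : QFPA v
  | remainder (a : Fin v → ℤ) (θ : ℕ) (c : Fin θ) : QFPA v
  | not (φ : QFPA v) : QFPA v
  | and (φ ψ : QFPA v) : QFPA v
  | or (φ ψ : QFPA v) : QFPA v

def QFPA.eval {v : ℕ} : QFPA v → (Fin v → ℕ) → Bool
  | .threshold a c, x => decide (c ≤ ∑ i, a i * (x i : ℤ))
  | .remainder a θ c, x => decide ((∑ i, a i * (x i : ℤ)) % (θ : ℤ) = ((c : ℕ) : ℤ))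
  | .not φ, x => !(QFPA.eval φ x)
  | .and φ ψ, x => QFPA.eval φ x && QFPA.eval ψ x
  | .or φ ψ, x => QFPA.eval φ x || QFPA.eval ψ x

def zsize (z : ℤ) : ℕ := Nat.size z.natAbs + 1

def QFPA.fsize {v : ℕ} : QFPA v → ℕ
  | .threshold a c => (∑ i, zsize (a i)) + zsize c + 1
  | .remainder a θ c => (∑ i, zsize (a i)) + Nat.size θ + Nat.size (c : ℕ) + 1
  | .not φ => QFPA.fsize φ + 1
  | .and φ ψ => QFPA.fsize φ + QFPA.fsize ψ + 1
  | .or φ ψ => QFPA.fsize φ + QFPA.fsize ψ + 1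

def QFPA.double {v : ℕ} : QFPA v → QFPA (v + v)
  | .threshold a c =>
      .threshold (fun i => Fin.addCases (fun j => a j) (fun j => 2 * a j) i) c
  | .remainder a θ c =>
      .remainder (fun i => Fin.addCases (fun j => a j) (fun j => 2 * a j) i) θ c
  | .not φ => .not (QFPA.double φ)
  | .and φ ψ => .and (QFPA.double φ) (QFPA.double ψ)
  | .or φ ψ => .or (QFPA.double φ) (QFPA.double ψ)

def inputConfig {v : ℕ} (lab : Fin v → σ) (x : Fin v → ℕ) : Multiset σ :=
  ∑ i : Fin v, Multiset.replicate (x i) (lab i)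

def DecidesQFPA [DecidableEq σ] {v : ℕ} (P : PopComputer σ) (lab : Fin v → σ)
    (φ : QFPA v) : Prop :=
  Function.Injective lab ∧ P.I = Finset.univ.image lab ∧
    ∀ x : Fin v → ℕ, HasOutput P (inputConfig lab x) (QFPA.eval φ x)

def DecidesQFPAFrom [DecidableEq σ] {v : ℕ} (P : PopComputer σ) (lab : Fin v → σ)
    (φ : QFPA v) (k : ℕ) : Prop :=
  Function.Injective lab ∧ P.I = Finset.univ.image lab ∧
    ∀ x : Fin v → ℕ, k ≤ ∑ i, x i → HasOutput P (inputConfig lab x) (QFPA.eval φ x)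

/-! Potential functions and rapidness. -/

def mweight (w : σ → ℕ) (C : Multiset σ) : ℕ := (C.map w).sum

def IsPotential (P : PopComputer σ) (w : σ → ℕ) : Prop :=
  ∀ t ∈ P.δ, mweight w t.2 + (Multiset.card t.1 - 1) ≤ mweight w t.1

def tmin [DecidableEq σ] (C r : Multiset σ) : ℕ :=
  if h : r.toFinset.Nonempty then r.toFinset.inf' h (fun q => C.count q) else 0

def speedOn [DecidableEq σ] (T : Finset (Multiset σ × Multiset σ)) (C : Multiset σ) : ℕ :=
  ∑ t ∈ T, (tmin C t.1) ^ 2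

def speed [DecidableEq σ] (P : PopComputer σ) (C : Multiset σ) : ℕ := speedOn P.δ C

def RapidAt [DecidableEq σ] (P : PopComputer σ) (w : σ → ℕ) (α : ℝ) (C : Multiset σ) : Prop :=
  ∀ Cterm, Reaches P C Cterm → Terminal P Cterm →
    ((mweight w C : ℝ) - (mweight w Cterm : ℝ)) ^ 2 / α ≤ (speed P C : ℝ)

def countIn [DecidableEq σ] (P : PopComputer σ) (C : Multiset σ) : ℕ :=
  ∑ q ∈ P.I, C.count q

def WellInitialised [DecidableEq σ] (P : PopComputer σ) (C : Multiset σ) : Prop :=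
  ReachableConfig P C ∧ 3 * (countIn P C + Multiset.card P.H) ≤ 2 * Multiset.card C

def outdeg [DecidableEq σ] (P : PopComputer σ) (q : σ) : ℕ :=
  (P.δ.filter (fun t => q ∈ t.1)).card

def IsRapid [DecidableEq σ] (P : PopComputer σ) (α : ℝ) : Prop :=
  (∃ w : σ → ℕ, IsPotential P w ∧ ∀ C, WellInitialised P C → RapidAt P w α C) ∧
  (∃ q0 : σ, ∀ q ∈ P.Q, q ≠ q0 → outdeg P q ≤ 2) ∧
  (∀ C : Multiset σ, IsInput P C → Terminal P C) ∧
  (∀ t ∈ P.δ, ∀ q ∈ P.I, t.1.count q ≤ 1 ∧ t.2.count q = 0)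

def deltaGt [DecidableEq σ] (P : PopComputer σ) (w : σ → ℕ) :
    Finset (Multiset σ × Multiset σ) :=
  P.δ.filter (fun t => mweight w t.2 < mweight w t.1)

def deltaLt [DecidableEq σ] (P : PopComputer σ) (w : σ → ℕ) :
    Finset (Multiset σ × Multiset σ) :=
  P.δ.filter (fun t => mweight w t.1 < mweight w t.2)

def RapidAtGt [DecidableEq σ] (P : PopComputer σ) (w : σ → ℕ) (α : ℝ) (C : Multiset σ) : Prop :=
  ∀ Cterm, Reaches P C Cterm → Terminal P Cterm →
    ((mweight w C : ℝ) - (mweight w Cterm : ℝ)) ^ 2 / α ≤ (speedOn (deltaGt P w) C : ℝ)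

def GroupRapidAt [DecidableEq σ] (P : PopComputer σ) {e : ℕ} (w : Fin e → σ → ℕ) (α : ℝ)
    (C : Multiset σ) : Prop :=
  Terminal P C ∨ ∃ i : Fin e,
    RapidAtGt P (w i) α C ∧
    (∃ t ∈ deltaGt P (w i), t.1 ≤ C) ∧
    (∀ C', Reaches P C C' → ∀ t ∈ deltaLt P (w i), ¬ t.1 ≤ C')

/-- Refinement between computers over the same state space. -/
def Refines [DecidableEq σ] (P' P : PopComputer σ) (π : Multiset σ → Multiset σ) : Prop :=
  (∀ C D, ReachableConfig P' C → ReachableConfig P' D → Step P' C D →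
    Reaches P (π C) (π D)) ∧
  (P.I = P'.I ∧ ∀ CI C, IsInput P' CI → Initial P' CI C →
    ((∃ DI, IsInput P DI ∧ Initial P DI (π C)) ∧
      ∀ q ∈ P.I, (π C).count q = C.count q)) ∧
  (∀ C, ReachableConfig P' C → Terminal P' C →
    Terminal P (π C) ∧ P.O (π C).toFinset = P'.O C.toFinset)


/-!
A terminal configuration is always reachable: firing an enabled decreasing transition of a
potential that can no longer increase lowers, lexicographically, the number of potentials that
may still increase and then the sum of the others. For a potential `Φ` that can no longer
increase, let its terminal gap `d` be `Φ` minus the least value of `Φ` over the reachable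
terminal configurations. Rapid decrease bounds `d²` by `α` times the speed, and the speed of
binary transitions is at most `4 · (number of enabled pairs) + |δ|`, so a decreasing transition
fires with probability at least `M(d) / (n choose 2)`, where `M(x) = max 1 (x²/(4α) - |δ|/4)`.
Weighting a gap `d` by `G(d) = ∑_{x ≤ d} 1/M(x)`, and a potential that may still increase by
`sup G`, gives a Lyapunov function `(n choose 2) · ∑ᵢ G(dᵢ)`: it never increases along a step and
drops by at least `1` in expectation at every non-terminal configuration, so it bounds the expected
termination time. Finally `1/M(x) ≤ 1` always and `1/M(x) ≤ 8α/x²` once `x² ≥ 2α|δ|`, whence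
`sup G = O(√(α|δ|) + α)`, and `|δ| ≤ |Q|²`.
-/

lemma PopComputer.injOn_fst_delta (P : PopComputer σ) :
    Set.InjOn Prod.fst (P.δ : Set (Multiset σ × Multiset σ)) :=
  fun t ht u hu h => Prod.ext h (P.delta_fun t ht u hu h)

lemma mweight_add (w : σ → ℕ) (A B : Multiset σ) :
    mweight w (A + B) = mweight w A + mweight w B := by
  simp [mweight]

section PairCount

variable [DecidableEq σ]

lemma pairCount_eq_zero_of_not_le {C r : Multiset σ} (h : ¬ r ≤ C) : pairCount C r = 0 :=
  Multiset.count_eq_zero.mpr fun hr => h (Multiset.mem_powersetCard.mp hr).1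

lemma pairCount_pos {C r : Multiset σ} (hr : r ≤ C) (h2 : Multiset.card r = 2) :
    0 < pairCount C r :=
  Multiset.count_pos.mpr (Multiset.mem_powersetCard.mpr ⟨hr, h2⟩)

lemma sum_pairCount_le_choose (P : PopComputer σ) (C : Multiset σ) :
    ∑ t ∈ P.δ, pairCount C t.1 ≤ (Multiset.card C).choose 2 := by
  set M := Multiset.powersetCard 2 C
  calc ∑ t ∈ P.δ, pairCount C t.1 = ∑ r ∈ P.δ.image Prod.fst, M.count r :=
        (Finset.sum_image P.injOn_fst_delta).symm
    _ ≤ ∑ r ∈ P.δ.image Prod.fst ∪ M.toFinset, M.count r :=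
        Finset.sum_le_sum_of_subset Finset.subset_union_left
    _ = (Multiset.card C).choose 2 := by
        rw [Multiset.sum_count_eq_card fun r hr =>
          Finset.mem_union_right _ (Multiset.mem_toFinset.mpr hr), Multiset.card_powersetCard]

lemma count_map_cons (c : σ) (r : Multiset σ) (M : Multiset (Multiset σ)) :
    (M.map (Multiset.cons c)).count r = if c ∈ r then M.count (r.erase c) else 0 := by
  split_ifs with hc
  · conv_lhs => rw [← Multiset.cons_erase hc]
    exact Multiset.count_map_eq_count' _ _ (fun _ _ => (Multiset.cons_inj_right c).mp) _
  · refine Multiset.count_eq_zero.mpr fun hr => ?_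
    obtain ⟨s, -, rfl⟩ := Multiset.mem_map.mp hr
    exact hc (Multiset.mem_cons_self c s)

lemma pairCount_cons (c : σ) (s r : Multiset σ) :
    pairCount (c ::ₘ s) r =
      pairCount s r + if c ∈ r then (Multiset.powersetCard 1 s).count (r.erase c) else 0 := by
  rw [pairCount, Multiset.powersetCard_cons, Multiset.count_add, count_map_cons]
  rfl

lemma count_powersetCard_one (s : Multiset σ) (x : σ) :
    (Multiset.powersetCard 1 s).count {x} = s.count x := by
  rw [Multiset.powersetCard_one]
  exact Multiset.count_map_eq_count' _ _ (fun _ _ => Multiset.singleton_inj.mp) _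

lemma pairCount_pair_of_ne {a b : σ} (hab : a ≠ b) (C : Multiset σ) :
    pairCount C {a, b} = C.count a * C.count b := by
  induction C using Multiset.induction with
  | empty => rfl
  | cons c s ih =>
    rw [pairCount_cons, ih]
    by_cases hca : c = a
    · subst hca
      simp [Multiset.erase_cons_head, count_powersetCard_one, hab, hab.symm, add_mul]
    by_cases hcb : c = b
    · subst hcb
      rw [Multiset.insert_eq_cons, Multiset.erase_cons_tail _ (Ne.symm hca),
        Multiset.erase_singleton]
      simp [count_powersetCard_one, hab, mul_add]
    · simp [hca, hcb, Ne.symm hca, Ne.symm hcb]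

lemma pairCount_pair_self (a : σ) (C : Multiset σ) :
    pairCount C {a, a} = (C.count a).choose 2 := by
  induction C using Multiset.induction with
  | empty => rfl
  | cons c s ih =>
    rw [pairCount_cons, ih]
    by_cases hca : c = a
    · subst hca
      simp [count_powersetCard_one, Nat.choose_succ_succ', add_comm]
    · simp [hca, Ne.symm hca]

end PairCount

section Speed

variable [DecidableEq σ]

lemma tmin_le_count {C r : Multiset σ} {q : σ} (hq : q ∈ r) : tmin C r ≤ C.count q := by
  have hr : r.toFinset.Nonempty := ⟨q, Multiset.mem_toFinset.mpr hq⟩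
  rw [tmin, dif_pos hr]
  exact Finset.inf'_le _ (Multiset.mem_toFinset.mpr hq)

lemma sq_le_four_mul_choose_two_add_one (n : ℕ) : n ^ 2 ≤ 4 * n.choose 2 + 1 := by
  rcases n with _ | m
  · simp
  · have h := Nat.add_one_mul_choose_eq m 1
    rw [Nat.choose_one_right] at h
    nlinarith

lemma tmin_sq_le {C r : Multiset σ} (h2 : Multiset.card r = 2) :
    tmin C r ^ 2 ≤ 4 * pairCount C r + 1 := by
  obtain ⟨a, b, rfl⟩ := Multiset.card_eq_two.mp h2
  have ha : tmin C {a, b} ≤ C.count a := tmin_le_count (Multiset.mem_cons_self a {b})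
  by_cases hab : a = b
  · subst hab
    calc tmin C {a, a} ^ 2 ≤ C.count a ^ 2 := Nat.pow_le_pow_left ha 2
      _ ≤ 4 * pairCount C {a, a} + 1 := by
        rw [pairCount_pair_self]; exact sq_le_four_mul_choose_two_add_one _
  · have hb : tmin C {a, b} ≤ C.count b := tmin_le_count (by simp)
    rw [pairCount_pair_of_ne hab, sq]
    nlinarith [Nat.mul_le_mul ha hb]

lemma speedOn_le {T : Finset (Multiset σ × Multiset σ)} (hT : ∀ t ∈ T, Multiset.card t.1 = 2)
    (C : Multiset σ) : speedOn T C ≤ 4 * ∑ t ∈ T, pairCount C t.1 + T.card := by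
  calc speedOn T C ≤ ∑ t ∈ T, (4 * pairCount C t.1 + 1) :=
        Finset.sum_le_sum fun t ht => tmin_sq_le (hT t ht)
    _ = 4 * ∑ t ∈ T, pairCount C t.1 + T.card := by
        rw [Finset.sum_add_distrib, Finset.mul_sum, Finset.card_eq_sum_ones]

lemma card_delta_le (P : PopComputer σ) (hbin : Binary P) : P.δ.card ≤ P.Q.card ^ 2 := by
  have hsub : P.δ.image Prod.fst ⊆ (P.Q ×ˢ P.Q).image fun p => {p.1, p.2} := by
    simp only [Finset.subset_iff, Finset.mem_image, Finset.mem_product]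
    rintro _ ⟨t, ht, rfl⟩
    obtain ⟨a, b, hab⟩ := Multiset.card_eq_two.mp (hbin t ht)
    have hQ : ∀ q ∈ t.1, q ∈ P.Q := fun q hq =>
      P.delta_mem t ht q (Multiset.mem_add.mpr (Or.inl hq))
    exact ⟨(a, b), ⟨hQ a (by simp [hab]), hQ b (by simp [hab])⟩, hab.symm⟩
  calc P.δ.card = (P.δ.image Prod.fst).card := (Finset.card_image_of_injOn P.injOn_fst_delta).symm
    _ ≤ ((P.Q ×ˢ P.Q).image fun p => ({p.1, p.2} : Multiset σ)).card := Finset.card_le_card hsub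
    _ ≤ P.Q.card ^ 2 := Finset.card_image_le.trans (by rw [Finset.card_product, sq])

end Speed

section Dynamics

variable [DecidableEq σ] {P : PopComputer σ}

-- `Step` has no `DecidableEq σ` argument: its multiset difference uses the classical instance.
lemma step_iff {C C' : Multiset σ} :
    Step P C C' ↔ ∃ t ∈ P.δ, t.1 ≤ C ∧ C' = C - t.1 + t.2 := by
  unfold Step
  convert Iff.rfl

lemma step_of_mem {C : Multiset σ} {t : Multiset σ × Multiset σ} (ht : t ∈ P.δ) (hle : t.1 ≤ C) :
    Step P C (C - t.1 + t.2) :=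
  step_iff.mpr ⟨t, ht, hle, rfl⟩

lemma Step.card_eq {C C' : Multiset σ} (h : Step P C C') :
    Multiset.card C' = Multiset.card C := by
  obtain ⟨t, ht, hle, rfl⟩ := step_iff.mp h
  have := Multiset.card_le_card hle
  rw [Multiset.card_add, Multiset.card_sub hle, (P.delta_card t ht).1]
  omega

lemma Reaches.card_eq {C C' : Multiset σ} (h : Reaches P C C') :
    Multiset.card C' = Multiset.card C := by
  induction h with
  | refl => rfl
  | tail _ hstep ih => rw [hstep.card_eq, ih]

lemma mweight_fire (w : σ → ℕ) {C : Multiset σ} {t : Multiset σ × Multiset σ} (hle : t.1 ≤ C) :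
    mweight w (C - t.1 + t.2) + mweight w t.1 = mweight w C + mweight w t.2 := by
  rw [mweight_add, add_right_comm, ← mweight_add, tsub_add_cancel_of_le hle]

end Dynamics

section Potential

variable [DecidableEq σ] {P : PopComputer σ}

def NonincreasingFrom (P : PopComputer σ) (w : σ → ℕ) (C : Multiset σ) : Prop :=
  ∀ C', Reaches P C C' → ∀ t ∈ deltaLt P w, ¬ t.1 ≤ C'

variable {w : σ → ℕ} {C C' : Multiset σ}

lemma NonincreasingFrom.of_reaches (h : NonincreasingFrom P w C) (hr : Reaches P C C') :
    NonincreasingFrom P w C' :=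
  fun _ hr' => h _ (hr.trans hr')

lemma NonincreasingFrom.mweight_le_of_step (h : NonincreasingFrom P w C) (hs : Step P C C') :
    mweight w C' ≤ mweight w C := by
  obtain ⟨t, ht, hle, rfl⟩ := step_iff.mp hs
  have hnot : mweight w t.2 ≤ mweight w t.1 :=
    not_lt.mp fun hlt => h C .refl t (Finset.mem_filter.mpr ⟨ht, hlt⟩) hle
  have := mweight_fire w hle
  omega

lemma NonincreasingFrom.mweight_le_of_reaches (h : NonincreasingFrom P w C)
    (hr : Reaches P C C') : mweight w C' ≤ mweight w C := by
  induction hr with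
  | refl => exact le_rfl
  | tail hr hs ih => exact ((h.of_reaches hr).mweight_le_of_step hs).trans ih

lemma mweight_fire_lt {t : Multiset σ × Multiset σ} (ht : t ∈ deltaGt P w) (hle : t.1 ≤ C) :
    mweight w (C - t.1 + t.2) < mweight w C := by
  have hlt := (Finset.mem_filter.mp ht).2
  have := mweight_fire w hle
  omega

end Potential

def TerminalReachable (P : PopComputer σ) (C : Multiset σ) : Prop :=
  ∃ Ct, Reaches P C Ct ∧ Terminal P Ct

section Termination

variable [DecidableEq σ] {P : PopComputer σ} {e : ℕ} {w : Fin e → σ → ℕ}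

noncomputable def activeIndices (P : PopComputer σ) (w : Fin e → σ → ℕ) (C : Multiset σ) :
    Finset (Fin e) :=
  Finset.univ.filter fun i => NonincreasingFrom P (w i) C

lemma activeIndices_subset_of_step {C C' : Multiset σ} (hs : Step P C C') :
    activeIndices P w C ⊆ activeIndices P w C' := by
  intro i
  simp only [activeIndices, Finset.mem_filter, Finset.mem_univ, true_and]
  exact fun hi => hi.of_reaches (.single hs)

lemma lex_lt_of_fire {C : Multiset σ} {i : Fin e} {t : Multiset σ × Multiset σ}
    (hi : NonincreasingFrom P (w i) C) (ht : t ∈ deltaGt P (w i)) (hle : t.1 ≤ C) :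
    Prod.Lex (· < ·) (· < ·)
      ((activeIndices P w (C - t.1 + t.2))ᶜ.card,
        ∑ j ∈ activeIndices P w (C - t.1 + t.2), mweight (w j) (C - t.1 + t.2))
      ((activeIndices P w C)ᶜ.card, ∑ j ∈ activeIndices P w C, mweight (w j) C) := by
  have hs := step_of_mem (Finset.mem_filter.mp ht).1 hle
  have hsub := activeIndices_subset_of_step (w := w) hs
  rcases hsub.eq_or_ssubset with heq | hssub
  · rw [← heq]
    refine Prod.Lex.right _ (Finset.sum_lt_sum (fun j hj => ?_) ⟨i, ?_, mweight_fire_lt ht hle⟩)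
    · exact (Finset.mem_filter.mp hj).2.mweight_le_of_step hs
    · simpa [activeIndices] using hi
  · exact Prod.Lex.left _ _ (Finset.card_lt_card (Finset.compl_ssubset_compl.mpr hssub))

theorem terminalReachable_of_exists_decreasing (C : Multiset σ)
    (hdec : ∀ C', Reaches P C C' → ¬ Terminal P C' →
      ∃ i, (∃ t ∈ deltaGt P (w i), t.1 ≤ C') ∧ NonincreasingFrom P (w i) C') :
    TerminalReachable P C := by
  by_cases hterm : Terminal P C
  · exact ⟨C, .refl, hterm⟩
  obtain ⟨i, ⟨t, ht, hle⟩, hi⟩ := hdec C .refl hterm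
  have hs := step_of_mem (Finset.mem_filter.mp ht).1 hle
  obtain ⟨Ct, hr, hCt⟩ := terminalReachable_of_exists_decreasing (C - t.1 + t.2)
    fun C' hr' => hdec C' (.head hs hr')
  exact ⟨Ct, .head hs hr, hCt⟩
termination_by ((activeIndices P w C)ᶜ.card, ∑ j ∈ activeIndices P w C, mweight (w j) C)
decreasing_by exact lex_lt_of_fire hi ht hle

end Termination

section TerminalGap

variable {P : PopComputer σ} {w : σ → ℕ} {C C' : Multiset σ}

noncomputable def minTerminalWeight (P : PopComputer σ) (w : σ → ℕ) (C : Multiset σ) : ℕ :=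
  sInf {k | ∃ Ct, Reaches P C Ct ∧ Terminal P Ct ∧ mweight w Ct = k}

noncomputable def terminalGap (P : PopComputer σ) (w : σ → ℕ) (C : Multiset σ) : ℕ :=
  mweight w C - minTerminalWeight P w C

lemma TerminalReachable.exists_mweight_eq_min (hC : TerminalReachable P C) :
    ∃ Ct, Reaches P C Ct ∧ Terminal P Ct ∧ mweight w Ct = minTerminalWeight P w C :=
  let ⟨Ct, hr, hCt⟩ := hC
  Nat.sInf_mem (s := {k | ∃ Ct, Reaches P C Ct ∧ Terminal P Ct ∧ mweight w Ct = k})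
    ⟨mweight w Ct, Ct, hr, hCt, rfl⟩

lemma minTerminalWeight_le_of_step (hs : Step P C C') (hC' : TerminalReachable P C') :
    minTerminalWeight P w C ≤ minTerminalWeight P w C' := by
  obtain ⟨Ct, hr, hCt, hmin⟩ := hC'.exists_mweight_eq_min (w := w)
  exact hmin ▸ Nat.sInf_le ⟨Ct, .head hs hr, hCt, rfl⟩

variable [DecidableEq σ]

lemma NonincreasingFrom.minTerminalWeight_le (h : NonincreasingFrom P w C)
    (hC : TerminalReachable P C) : minTerminalWeight P w C ≤ mweight w C := by
  obtain ⟨Ct, hr, -, hmin⟩ := hC.exists_mweight_eq_min (w := w)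
  exact hmin ▸ h.mweight_le_of_reaches hr

lemma NonincreasingFrom.terminalGap_le_of_step (h : NonincreasingFrom P w C) (hs : Step P C C')
    (hC' : TerminalReachable P C') : terminalGap P w C' ≤ terminalGap P w C := by
  have := h.mweight_le_of_step hs
  have := minTerminalWeight_le_of_step (w := w) hs hC'
  unfold terminalGap
  omega

lemma NonincreasingFrom.terminalGap_lt_of_fire {t : Multiset σ × Multiset σ}
    (h : NonincreasingFrom P w C) (ht : t ∈ deltaGt P w) (hle : t.1 ≤ C)
    (hC' : TerminalReachable P (C - t.1 + t.2)) :
    terminalGap P w (C - t.1 + t.2) < terminalGap P w C := by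
  have hs := step_of_mem (Finset.mem_filter.mp ht).1 hle
  have := mweight_fire_lt ht hle
  have := minTerminalWeight_le_of_step (w := w) hs hC'
  have := (h.of_reaches (.single hs)).minTerminalWeight_le hC'
  unfold terminalGap
  omega

lemma NonincreasingFrom.terminalGap_sq_le {α : ℝ} (hα : 0 < α) (h : NonincreasingFrom P w C)
    (hC : TerminalReachable P C) (hrap : RapidAtGt P w α C) :
    (terminalGap P w C : ℝ) ^ 2 ≤ α * speedOn (deltaGt P w) C := by
  obtain ⟨Ct, hr, hCt, hmin⟩ := hC.exists_mweight_eq_min (w := w)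
  have hgap : (terminalGap P w C : ℝ) = mweight w C - mweight w Ct := by
    rw [terminalGap, Nat.cast_sub (h.minTerminalWeight_le hC), hmin]
  rw [hgap, ← div_le_iff₀' hα]
  exact hrap Ct hr hCt

end TerminalGap

section GapWeight

variable {α D : ℝ}

-- If the terminal gap is `x`, rapid decrease gives `x² ≤ α · speed ≤ α (4 · rate + |δ|)`, where
-- `rate` counts the enabled pairs of decreasing transitions; hence `rate ≥ rateBound α |δ| x`.
noncomputable def rateBound (α D : ℝ) (x : ℕ) : ℝ := max 1 ((x : ℝ) ^ 2 / (4 * α) - D / 4)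

noncomputable def gapWeight (α D : ℝ) (d : ℕ) : ℝ := ∑ x ∈ Finset.Icc 1 d, (rateBound α D x)⁻¹

lemma one_le_rateBound (x : ℕ) : 1 ≤ rateBound α D x := le_max_left _ _

lemma rateBound_le {x : ℕ} {S : ℝ} (hα : 0 < α) (hS : 1 ≤ S) (hx : (x : ℝ) ^ 2 ≤ α * (4 * S + D)) :
    rateBound α D x ≤ S := by
  refine max_le hS ?_
  rw [sub_le_iff_le_add, div_le_iff₀ (by positivity)]
  linarith

lemma inv_rateBound_le_one (x : ℕ) : (rateBound α D x)⁻¹ ≤ 1 :=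
  inv_le_one_of_one_le₀ (one_le_rateBound x)

lemma inv_rateBound_le {x : ℕ} (hα : 0 < α) (hx : 0 < x) (hD : 2 * α * D ≤ (x : ℝ) ^ 2) :
    (rateBound α D x)⁻¹ ≤ 8 * α * ((x : ℝ) ^ 2)⁻¹ := by
  have hx' : (0 : ℝ) < (x : ℝ) ^ 2 := by positivity
  have hlow : (x : ℝ) ^ 2 / (8 * α) ≤ rateBound α D x := by
    refine le_max_of_le_right ?_
    rw [le_sub_iff_add_le, div_add_div _ _ (by positivity) (by norm_num),
      div_le_div_iff₀ (by positivity) (by positivity)]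
    nlinarith
  calc (rateBound α D x)⁻¹ ≤ ((x : ℝ) ^ 2 / (8 * α))⁻¹ := inv_anti₀ (by positivity) hlow
    _ = 8 * α * ((x : ℝ) ^ 2)⁻¹ := by rw [inv_div, div_eq_mul_inv]

lemma gapWeight_nonneg (d : ℕ) : 0 ≤ gapWeight α D d :=
  Finset.sum_nonneg fun x _ => inv_nonneg.mpr (zero_le_one.trans (one_le_rateBound x))

lemma gapWeight_mono : Monotone (gapWeight α D) := fun _ _ h =>
  Finset.sum_le_sum_of_subset_of_nonneg (Finset.Icc_subset_Icc_right h)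
    fun x _ _ => inv_nonneg.mpr (zero_le_one.trans (one_le_rateBound x))

lemma gapWeight_succ (d : ℕ) :
    gapWeight α D (d + 1) = gapWeight α D d + (rateBound α D (d + 1))⁻¹ := by
  rw [gapWeight, Finset.sum_Icc_succ_top (by omega), ← gapWeight]

-- Terms up to `k` are at most `1`; beyond `k` they are at most `8α / x²`, with tail sum `O(α / k)`.
lemma gapWeight_le (hα : 0 < α) {k : ℕ} (hk : 2 * α * D ≤ (k : ℝ) ^ 2) (d : ℕ) :
    gapWeight α D d ≤ k + 16 * α / (k + 1) := by
  rw [gapWeight, ← Finset.sum_filter_add_sum_filter_not _ (· ≤ k)]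
  gcongr
  · calc ∑ x ∈ Finset.Icc 1 d with x ≤ k, (rateBound α D x)⁻¹
        ≤ ∑ x ∈ Finset.Icc 1 d with x ≤ k, 1 := Finset.sum_le_sum fun x _ => inv_rateBound_le_one x
      _ ≤ k := by
        rw [Finset.sum_const, nsmul_one, Nat.cast_le]
        refine (Finset.card_le_card fun x hx => ?_).trans (Nat.card_Icc 1 k).le
        simp only [Finset.mem_filter, Finset.mem_Icc] at hx ⊢
        omega
  · calc ∑ x ∈ Finset.Icc 1 d with ¬x ≤ k, (rateBound α D x)⁻¹
        ≤ ∑ x ∈ Finset.Icc 1 d with ¬x ≤ k, 8 * α * ((x : ℝ) ^ 2)⁻¹ := by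
          refine Finset.sum_le_sum fun x hx => ?_
          simp only [Finset.mem_filter, Finset.mem_Icc, not_le] at hx
          refine inv_rateBound_le hα (by omega) (hk.trans ?_)
          gcongr
          exact hx.2.le
      _ ≤ ∑ x ∈ Finset.Ioo k (d + 1), 8 * α * ((x : ℝ) ^ 2)⁻¹ := by
          refine Finset.sum_le_sum_of_subset_of_nonneg (fun x hx => ?_) fun x _ _ => by positivity
          simp only [Finset.mem_filter, Finset.mem_Icc, Finset.mem_Ioo] at hx ⊢
          omega
      _ = 8 * α * ∑ x ∈ Finset.Ioo k (d + 1), ((x : ℝ) ^ 2)⁻¹ := (Finset.mul_sum ..).symm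
      _ ≤ 8 * α * (2 / (k + 1)) := by gcongr; exact sum_Ioo_inv_sq_le k (d + 1)
      _ = 16 * α / (k + 1) := by ring

noncomputable def gapCap (α D : ℝ) : ℝ := ⨆ d, gapWeight α D d

lemma bddAbove_range_gapWeight (hα : 0 < α) : BddAbove (Set.range (gapWeight α D)) := by
  refine ⟨_, Set.forall_mem_range.mpr (gapWeight_le hα (k := ⌈2 * α * D⌉₊) ?_)⟩
  calc 2 * α * D ≤ ⌈2 * α * D⌉₊ := Nat.le_ceil _
    _ ≤ (⌈2 * α * D⌉₊ : ℝ) ^ 2 := by exact_mod_cast Nat.le_self_pow two_ne_zero _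

lemma gapWeight_le_gapCap (hα : 0 < α) (d : ℕ) : gapWeight α D d ≤ gapCap α D :=
  le_ciSup (bddAbove_range_gapWeight hα) d

lemma gapCap_nonneg (hα : 0 < α) : 0 ≤ gapCap α D :=
  (gapWeight_nonneg 0).trans (gapWeight_le_gapCap hα 0)

lemma gapCap_le {q : ℝ} (hα : 1 ≤ α) (hq : 0 ≤ q) (hD : D ≤ q ^ 2) :
    gapCap α D ≤ 17 * (√α * q + α) := by
  set k := ⌈2 * √α * q⌉₊
  have hsq : √α ^ 2 = α := Real.sq_sqrt (by linarith)
  have hk : 2 * √α * q ≤ k := Nat.le_ceil _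
  have hk' : (k : ℝ) < 2 * √α * q + 1 := Nat.ceil_lt_add_one (by positivity)
  have hkD : 2 * α * D ≤ (k : ℝ) ^ 2 := by
    have : (2 * √α * q) ^ 2 ≤ (k : ℝ) ^ 2 := pow_le_pow_left₀ (by positivity) hk 2
    nlinarith
  have hfrac : 16 * α / (k + 1) ≤ 16 * α :=
    div_le_self (by linarith) (by linarith [k.cast_nonneg (α := ℝ)])
  refine ciSup_le fun d => (gapWeight_le (by linarith) hkD d).trans ?_
  nlinarith [Real.sqrt_nonneg α]

end GapWeight

section Lyapunov

variable [DecidableEq σ] {P : PopComputer σ} {α : ℝ} {C C' : Multiset σ} {v : σ → ℕ}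

lemma NonincreasingFrom.rateBound_terminalGap_le (h : NonincreasingFrom P v C) (hbin : Binary P)
    (hα : 0 < α) (hC : TerminalReachable P C) (hrap : RapidAtGt P v α C)
    (hen : ∃ t ∈ deltaGt P v, t.1 ≤ C) :
    rateBound α P.δ.card (terminalGap P v C) ≤ ∑ t ∈ deltaGt P v, (pairCount C t.1 : ℝ) := by
  obtain ⟨t₀, ht₀, hle₀⟩ := hen
  have hTδ : deltaGt P v ⊆ P.δ := Finset.filter_subset _ _
  have hS : 1 ≤ ∑ t ∈ deltaGt P v, (pairCount C t.1 : ℝ) := by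
    have h₀ : (1 : ℝ) ≤ pairCount C t₀.1 := by
      exact_mod_cast pairCount_pos hle₀ (hbin t₀ (hTδ ht₀))
    exact h₀.trans (Finset.single_le_sum (f := fun t => (pairCount C t.1 : ℝ))
      (fun _ _ => Nat.cast_nonneg _) ht₀)
  refine rateBound_le hα hS ((h.terminalGap_sq_le hα hC hrap).trans ?_)
  have hspeed := speedOn_le (fun t ht => hbin t (hTδ ht)) C
  have hcard := Finset.card_le_card hTδ
  gcongr
  calc (speedOn (deltaGt P v) C : ℝ)
      ≤ ((4 * ∑ t ∈ deltaGt P v, pairCount C t.1 + (deltaGt P v).card : ℕ) : ℝ) := by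
        exact_mod_cast hspeed
    _ ≤ 4 * ∑ t ∈ deltaGt P v, (pairCount C t.1 : ℝ) + P.δ.card := by push_cast; gcongr

/-- While `v` may still increase, its term sits at the cap `gapCap`, above every value it can
take later; this is what makes `lyapunov` nonincreasing along steps. -/
noncomputable def gapTerm (P : PopComputer σ) (v : σ → ℕ) (α : ℝ) (C : Multiset σ) : ℝ :=
  if NonincreasingFrom P v C then gapWeight α P.δ.card (terminalGap P v C) else gapCap α P.δ.card

noncomputable def lyapunov {e : ℕ} (P : PopComputer σ) (w : Fin e → σ → ℕ) (α : ℝ)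
    (C : Multiset σ) : ℝ :=
  ∑ i, gapTerm P (w i) α C


lemma gapTerm_nonneg (hα : 0 < α) (C : Multiset σ) : 0 ≤ gapTerm P v α C := by
  unfold gapTerm
  split_ifs
  exacts [gapWeight_nonneg _, gapCap_nonneg hα]

lemma gapTerm_le_gapCap (hα : 0 < α) (C : Multiset σ) : gapTerm P v α C ≤ gapCap α P.δ.card := by
  unfold gapTerm
  split_ifs
  exacts [gapWeight_le_gapCap hα _, le_rfl]

lemma gapTerm_le_of_step (hα : 0 < α) (hs : Step P C C') (hC' : TerminalReachable P C') :
    gapTerm P v α C' ≤ gapTerm P v α C := by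
  by_cases hv : NonincreasingFrom P v C
  · rw [gapTerm, gapTerm, if_pos (hv.of_reaches (.single hs)), if_pos hv]
    exact gapWeight_mono (hv.terminalGap_le_of_step hs hC')
  · exact (gapTerm_le_gapCap hα C').trans_eq (if_neg hv).symm

lemma gapTerm_add_inv_rateBound_le {t : Multiset σ × Multiset σ} (hv : NonincreasingFrom P v C)
    (ht : t ∈ deltaGt P v) (hle : t.1 ≤ C) (hC' : TerminalReachable P (C - t.1 + t.2)) :
    gapTerm P v α (C - t.1 + t.2) + (rateBound α P.δ.card (terminalGap P v C))⁻¹ ≤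
      gapTerm P v α C := by
  have hs := step_of_mem (Finset.mem_filter.mp ht).1 hle
  have hlt := hv.terminalGap_lt_of_fire ht hle hC'
  obtain ⟨g, hg⟩ := Nat.exists_eq_add_one.mpr (Nat.zero_lt_of_lt hlt)
  rw [gapTerm, gapTerm, if_pos (hv.of_reaches (.single hs)), if_pos hv, hg, gapWeight_succ]
  gcongr
  exact gapWeight_mono (by omega)

variable {e : ℕ} {w : Fin e → σ → ℕ}

lemma lyapunov_nonneg (hα : 0 < α) (C : Multiset σ) : 0 ≤ lyapunov P w α C :=
  Finset.sum_nonneg fun _ _ => gapTerm_nonneg hα C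

lemma lyapunov_le (hα : 0 < α) (C : Multiset σ) : lyapunov P w α C ≤ e * gapCap α P.δ.card := by
  calc lyapunov P w α C ≤ ∑ _i : Fin e, gapCap α P.δ.card :=
        Finset.sum_le_sum fun _ _ => gapTerm_le_gapCap hα C
    _ = e * gapCap α P.δ.card := by simp

lemma lyapunov_le_of_step (hα : 0 < α) (hs : Step P C C') (hC' : TerminalReachable P C') :
    lyapunov P w α C' ≤ lyapunov P w α C :=
  Finset.sum_le_sum fun _ _ => gapTerm_le_of_step hα hs hC'

lemma lyapunov_add_inv_rateBound_le (hα : 0 < α) {i : Fin e} {t : Multiset σ × Multiset σ}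
    (hi : NonincreasingFrom P (w i) C) (ht : t ∈ deltaGt P (w i)) (hle : t.1 ≤ C)
    (hC' : TerminalReachable P (C - t.1 + t.2)) :
    lyapunov P w α (C - t.1 + t.2) + (rateBound α P.δ.card (terminalGap P (w i) C))⁻¹ ≤
      lyapunov P w α C := by
  have hs := step_of_mem (Finset.mem_filter.mp ht).1 hle
  rw [lyapunov, lyapunov, ← Finset.add_sum_erase _ _ (Finset.mem_univ i),
    ← Finset.add_sum_erase _ _ (Finset.mem_univ i), add_right_comm]
  gcongr with j
  · exact gapTerm_add_inv_rateBound_le hi ht hle hC'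
  · exact gapTerm_le_of_step hα hs hC'

lemma lyapunov_le_of_binary (hbin : Binary P) (hα : 1 ≤ α) (C : Multiset σ) :
    lyapunov P w α C ≤ e * (17 * (√α * P.Q.card + α)) := by
  have hD : (P.δ.card : ℝ) ≤ (P.Q.card : ℝ) ^ 2 := by exact_mod_cast card_delta_le P hbin
  refine (lyapunov_le (by linarith) C).trans ?_
  gcongr
  exact gapCap_le hα (Nat.cast_nonneg _) hD

-- Each decreasing transition of the selected potential lowers `lyapunov` by the inverse of
-- `rateBound` of its terminal gap, and their rates add up to at least that bound.
theorem one_le_sum_pairCount_mul_lyapunov_sub (hbin : Binary P) (hα : 0 < α)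
    (hreach : ∀ C', Reaches P C C' → TerminalReachable P C') (hC : ¬ Terminal P C)
    (hrapid : GroupRapidAt P w α C) :
    1 ≤ ∑ t ∈ P.δ, (pairCount C t.1 : ℝ) * (lyapunov P w α C - lyapunov P w α (C - t.1 + t.2)) := by
  obtain ⟨i, hrap, hen, hi : NonincreasingFrom P (w i) C⟩ := hrapid.resolve_left hC
  set T := deltaGt P (w i)
  set r := rateBound α P.δ.card (terminalGap P (w i) C)
  have hTδ : T ⊆ P.δ := Finset.filter_subset _ _
  have hrS := hi.rateBound_terminalGap_le hbin hα (hreach C .refl) hrap hen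
  have hdrop : ∀ t ∈ P.δ,
      0 ≤ (pairCount C t.1 : ℝ) * (lyapunov P w α C - lyapunov P w α (C - t.1 + t.2)) := by
    intro t ht
    by_cases hle : t.1 ≤ C
    · have hs := step_of_mem ht hle
      exact mul_nonneg (Nat.cast_nonneg _)
        (sub_nonneg.mpr (lyapunov_le_of_step hα hs (hreach _ (.single hs))))
    · simp [pairCount_eq_zero_of_not_le hle]
  have hr : 0 < r := zero_lt_one.trans_le (one_le_rateBound _)
  calc (1 : ℝ) = r * r⁻¹ := (mul_inv_cancel₀ hr.ne').symm
    _ ≤ (∑ t ∈ T, (pairCount C t.1 : ℝ)) * r⁻¹ := by gcongr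
    _ = ∑ t ∈ T, (pairCount C t.1 : ℝ) * r⁻¹ := Finset.sum_mul ..
    _ ≤ ∑ t ∈ T, (pairCount C t.1 : ℝ) * (lyapunov P w α C - lyapunov P w α (C - t.1 + t.2)) := by
        refine Finset.sum_le_sum fun t ht => ?_
        by_cases hle : t.1 ≤ C
        · have hs := step_of_mem (hTδ ht) hle
          gcongr
          linarith [lyapunov_add_inv_rateBound_le hα hi ht hle (hreach _ (.single hs))]
        · simp [pairCount_eq_zero_of_not_le hle]
    _ ≤ ∑ t ∈ P.δ, (pairCount C t.1 : ℝ) * (lyapunov P w α C - lyapunov P w α (C - t.1 + t.2)) :=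
        Finset.sum_le_sum_of_subset_of_nonneg hTδ fun t ht _ => hdrop t ht

end Lyapunov

section Markov

variable [DecidableEq σ] (P : PopComputer σ)

lemma stepKer_eq (C C' : Multiset σ) :
    stepKer P C C' =
      (∑ t ∈ P.δ, if C' = C - t.1 + t.2 then (pairCount C t.1 : ℝ≥0∞) else 0) /
          (Multiset.card C).choose 2 +
        if C' = C then 1 - (∑ t ∈ P.δ, (pairCount C t.1 : ℝ≥0∞)) / (Multiset.card C).choose 2
        else 0 := by
  rw [stepKer]
  congr 2
  refine Finset.sum_congr rfl fun t _ => ?_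
  by_cases hle : t.1 ≤ C
  · simp [hle]
  · simp [hle, pairCount_eq_zero_of_not_le hle]

lemma tsum_stepKer_mul (C : Multiset σ) (g : Multiset σ → ℝ≥0∞) :
    ∑' C', stepKer P C C' * g C' =
      (∑ t ∈ P.δ, pairCount C t.1 * g (C - t.1 + t.2)) / (Multiset.card C).choose 2 +
        (1 - (∑ t ∈ P.δ, (pairCount C t.1 : ℝ≥0∞)) / (Multiset.card C).choose 2) * g C := by
  simp only [stepKer_eq, div_eq_mul_inv, add_mul, Finset.sum_mul, ite_mul, zero_mul,
    ENNReal.tsum_add, Summable.tsum_finsetSum fun _ _ => ENNReal.summable, tsum_ite_eq]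
  congr 1
  refine Finset.sum_congr rfl fun t _ => ?_
  ring

variable {P} {C : Multiset σ}

theorem tsum_stepKer_mul_ofReal_add_one_le (hC : 2 ≤ Multiset.card C) {H : Multiset σ → ℝ}
    (hH : ∀ D, 0 ≤ H D)
    (hdrift : 1 ≤ ∑ t ∈ P.δ, (pairCount C t.1 : ℝ) * (H C - H (C - t.1 + t.2))) :
    ∑' C', stepKer P C C' * ENNReal.ofReal ((Multiset.card C).choose 2 * H C') + 1 ≤
      ENNReal.ofReal ((Multiset.card C).choose 2 * H C) := by
  set b : ℝ := ↑((Multiset.card C).choose 2)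
  have hb : 0 < b := Nat.cast_pos.mpr (Nat.choose_pos hC)
  have hb' : ((Multiset.card C).choose 2 : ℝ≥0∞) = ENNReal.ofReal b :=
    (ENNReal.ofReal_natCast _).symm
  set S : ℝ := ∑ t ∈ P.δ, (pairCount C t.1 : ℝ)
  have hS : S ≤ b := by
    simp only [S, b, ← Nat.cast_sum, Nat.cast_le]
    exact sum_pairCount_le_choose P C
  have hS' : ∑ t ∈ P.δ, (pairCount C t.1 : ℝ≥0∞) = ENNReal.ofReal S := by
    rw [ENNReal.ofReal_sum_of_nonneg fun _ _ => Nat.cast_nonneg _]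
    simp_rw [ENNReal.ofReal_natCast]
  set X : ℝ := ∑ t ∈ P.δ, (pairCount C t.1 : ℝ) * H (C - t.1 + t.2)
  have hX : ∑ t ∈ P.δ, (pairCount C t.1 : ℝ≥0∞) * ENNReal.ofReal (b * H (C - t.1 + t.2)) =
      ENNReal.ofReal X * ENNReal.ofReal b := by
    rw [mul_comm, ← ENNReal.ofReal_mul hb.le, Finset.mul_sum,
      ENNReal.ofReal_sum_of_nonneg fun t _ => by have := hH (C - t.1 + t.2); positivity]
    refine Finset.sum_congr rfl fun t _ => ?_
    rw [← ENNReal.ofReal_natCast, ← ENNReal.ofReal_mul (Nat.cast_nonneg _)]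
    ring_nf
  have hX0 : 0 ≤ X := Finset.sum_nonneg fun t _ => mul_nonneg (Nat.cast_nonneg _) (hH _)
  have hstay : 0 ≤ 1 - S / b := sub_nonneg.mpr ((div_le_one hb).mpr hS)
  rw [tsum_stepKer_mul, hX, hb', ENNReal.mul_div_cancel_right (by positivity) ENNReal.ofReal_ne_top,
    hS', ← ENNReal.ofReal_div_of_pos hb, ← ENNReal.ofReal_one,
    ← ENNReal.ofReal_sub _ (by positivity), ← ENNReal.ofReal_mul hstay, ← ENNReal.ofReal_add,
    ← ENNReal.ofReal_add]
  · refine ENNReal.ofReal_le_ofReal ?_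
    have hdrift' : 1 ≤ S * H C - X := by
      simpa only [S, X, mul_sub, Finset.sum_sub_distrib, Finset.sum_mul] using hdrift
    have hcancel : (1 - S / b) * (b * H C) = b * H C - S * H C := by field_simp
    linarith
  all_goals have := hH C; positivity

end Markov

section HittingTime

variable [DecidableEq σ] {P : PopComputer σ} {A : Set (Multiset σ)} {C₀ C C' : Multiset σ}

lemma eq_or_step_of_stepKer_ne_zero (h : stepKer P C C' ≠ 0) : C' = C ∨ Step P C C' := by
  by_cases hC : C' = C
  · exact Or.inl hC
  rw [stepKer_eq, if_neg hC, add_zero] at h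
  obtain ⟨t, ht, hne⟩ := Finset.exists_ne_zero_of_sum_ne_zero (left_ne_zero_of_mul h)
  obtain ⟨rfl, hpc⟩ := ne_eq _ _ ▸ ite_ne_right_iff.mp hne
  have hle : t.1 ≤ C := by_contra fun hle => hpc (by simp [pairCount_eq_zero_of_not_le hle])
  exact Or.inr (step_of_mem ht hle)

lemma eq_or_step_of_hitKer_ne_zero (h : hitKer P A C C' ≠ 0) : C' = C ∨ Step P C C' := by
  unfold hitKer at h
  split_ifs at h with hA hC
  exacts [Or.inl hC, absurd rfl h, eq_or_step_of_stepKer_ne_zero h]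

lemma reaches_of_hitIter_ne_zero {N : ℕ} (h : hitIter P A N C₀ C ≠ 0) : Reaches P C₀ C := by
  induction N generalizing C with
  | zero =>
    simp only [hitIter, ne_eq, ite_eq_right_iff, one_ne_zero, imp_false, not_not] at h
    exact h ▸ .refl
  | succ N ih =>
    obtain ⟨D, hD⟩ := not_forall.mp (mt ENNReal.tsum_eq_zero.mpr h)
    rcases eq_or_step_of_hitKer_ne_zero (right_ne_zero_of_mul hD) with rfl | hs
    exacts [ih (left_ne_zero_of_mul hD), (ih (left_ne_zero_of_mul hD)).tail hs]

variable (P A)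

lemma tsum_hitIter_zero_mul (C₀ : Multiset σ) (h : Multiset σ → ℝ≥0∞) :
    ∑' C, hitIter P A 0 C₀ C * h C = h C₀ := by
  simp [hitIter]

lemma tsum_hitIter_succ_mul (N : ℕ) (C₀ : Multiset σ) (h : Multiset σ → ℝ≥0∞) :
    ∑' C, hitIter P A (N + 1) C₀ C * h C =
      ∑' D, hitIter P A N C₀ D * ∑' C, hitKer P A D C * h C := by
  simp only [hitIter, ← ENNReal.tsum_mul_right, ← ENNReal.tsum_mul_left, mul_assoc]
  exact ENNReal.tsum_comm

lemma tsum_hitKer_mul (D : Multiset σ) (h : Multiset σ → ℝ≥0∞) :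
    ∑' C, hitKer P A D C * h C = if D ∈ A then h D else ∑' C, stepKer P D C * h C := by
  unfold hitKer
  split_ifs <;> simp

variable {P A}

lemma tsum_notMem_hitIter_add_le {h : Multiset σ → ℝ≥0∞}
    (hdrift : ∀ C, Reaches P C₀ C → C ∉ A → ∑' C', stepKer P C C' * h C' + 1 ≤ h C) (N : ℕ) :
    (∑' C, if C ∈ A then 0 else hitIter P A N C₀ C) + ∑' C, hitIter P A (N + 1) C₀ C * h C ≤
      ∑' C, hitIter P A N C₀ C * h C := by
  rw [tsum_hitIter_succ_mul, ← ENNReal.tsum_add]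
  refine ENNReal.tsum_le_tsum fun D => ?_
  rw [tsum_hitKer_mul]
  by_cases hD : D ∈ A
  · simp [hD]
  by_cases hN : hitIter P A N C₀ D = 0
  · simp [hN]
  rw [if_neg hD, if_neg hD]
  calc hitIter P A N C₀ D + hitIter P A N C₀ D * ∑' C, stepKer P D C * h C
      = hitIter P A N C₀ D * (∑' C, stepKer P D C * h C + 1) := by ring
    _ ≤ hitIter P A N C₀ D * h D :=
      mul_le_mul_of_nonneg_left (hdrift D (reaches_of_hitIter_ne_zero hN) hD) zero_le

theorem expHit_le_of_drift {h : Multiset σ → ℝ≥0∞}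
    (hdrift : ∀ C, Reaches P C₀ C → C ∉ A → ∑' C', stepKer P C C' * h C' + 1 ≤ h C) :
    expHit P A C₀ ≤ h C₀ := by
  have htele : ∀ M, ∑ N ∈ Finset.range M, (∑' C, if C ∈ A then 0 else hitIter P A N C₀ C) +
      ∑' C, hitIter P A M C₀ C * h C ≤ h C₀ := by
    intro M
    induction M with
    | zero => simp [tsum_hitIter_zero_mul]
    | succ M ih =>
      rw [Finset.sum_range_succ, add_assoc]
      exact (add_le_add le_rfl (tsum_notMem_hitIter_add_le hdrift M)).trans ih
  exact ENNReal.tsum_le_of_sum_range_le fun M => le_self_add.trans (htele M)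

end HittingTime

theorem expTermination_le_of_groupRapidAt [DecidableEq σ] {P : PopComputer σ} {e : ℕ}
    {w : Fin e → σ → ℕ} {α : ℝ} {C₀ : Multiset σ} (hbin : Binary P) (hα : 1 ≤ α)
    (hgroup : ∀ C, Reaches P C₀ C → GroupRapidAt P w α C) :
    expTermination P C₀ ≤
      ENNReal.ofReal (17 * e * (√α * P.Q.card + α) * (Multiset.card C₀ : ℝ) ^ 2) := by
  have hα₀ : 0 < α := by linarith
  have hreach : ∀ C, Reaches P C₀ C → TerminalReachable P C := fun C hC =>
    terminalReachable_of_exists_decreasing (w := w) C fun C' hC' hterm =>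
      let ⟨i, _, hdec, hi⟩ := (hgroup C' (hC.trans hC')).resolve_left hterm
      ⟨i, hdec, hi⟩
  set n := Multiset.card C₀
  calc expTermination P C₀ ≤ ENNReal.ofReal (n.choose 2 * lyapunov P w α C₀) := by
        refine expHit_le_of_drift (h := fun C => ENNReal.ofReal (n.choose 2 * lyapunov P w α C))
          fun C hC hterm => ?_
        obtain ⟨i, -, ⟨t, ht, hle⟩, -⟩ := (hgroup C hC).resolve_left hterm
        have h2 : 2 ≤ Multiset.card C :=
          hbin t (Finset.filter_subset _ _ ht) ▸ Multiset.card_le_card hle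
        have hn : Multiset.card C = n := hC.card_eq
        rw [← hn]
        exact tsum_stepKer_mul_ofReal_add_one_le h2 (lyapunov_nonneg hα₀)
          (one_le_sum_pairCount_mul_lyapunov_sub hbin hα₀
            (fun C' hC' => hreach C' (hC.trans hC')) hterm (hgroup C hC))
    _ ≤ ENNReal.ofReal (n ^ 2 * (e * (17 * (√α * P.Q.card + α)))) := by
        gcongr
        · exact lyapunov_nonneg hα₀ C₀
        · exact_mod_cast Nat.choose_le_pow n 2
        · exact lyapunov_le_of_binary hbin hα C₀
    _ = ENNReal.ofReal (17 * e * (√α * P.Q.card + α) * (n : ℝ) ^ 2) := by ring_nf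

/-- Proposition 8.14: termination time from rapidly decreasing potential groups. -/
theorem stmt17 :
    ∃ c : ℕ, 0 < c ∧
      ∀ (σ : Type) [DecidableEq σ] (P : PopComputer σ),
        IsProtocol P →
        ∀ (e : ℕ) (w : Fin e → σ → ℕ) (α : ℝ) (m : ℕ), 1 ≤ α →
          (∀ C, ReachableConfig P C → m ≤ Multiset.card C → GroupRapidAt P w α C) →
          ∀ C0 : Multiset σ, IsInput P C0 → m ≤ Multiset.card C0 →
            expTermination P C0 ≤
              ENNReal.ofReal ((c : ℝ) * (e : ℝ) *
                (Real.sqrt α * (P.Q.card : ℝ) + α) * (Multiset.card C0 : ℝ) ^ 2) := by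
  refine ⟨17, by norm_num, fun σ _ P hP e w α m hα hgroup C₀ hC₀ hm => ?_⟩
  have hreach : ∀ C, Reaches P C₀ C → GroupRapidAt P w α C := fun C hC =>
    hgroup C ⟨C₀, C₀, hC₀, ⟨0, by simp, by simp [hP.2.1], by simp⟩, hC⟩ (hC.card_eq ▸ hm)
  simpa using expTermination_le_of_groupRapidAt hP.1 hα hreach

end PaperPP
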